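/- arXiv:2501.17493 — 3 statements merged into one kernel-verified Lean document; each statement's English description precedes it below -/
import Mathlib

section
/- Let w_i be a variable reifying O_i ≥ O_i(α) (i.e., in assignment β, w_i = 1 iff O_i(β) ≥ O_i(α)). Then any complete assignment β that sets all w_i to 1 in accordance with the reification and falsifies C_α := Σ_i |α|·(1−w_i) + Σ_{ℓ∈α} ℓ ≥ |α| is weakly dominated by α. -/
/-- If β assigns the reified variables w_i according to their semantics
(w_i = 1 ↔ O_i(β) ≥ O_i(α)) and falsifies C_α, then β is weakly dominated
by α. -/
theorem falsify_Calpha_weakly_dominated {V : Type*} [Fintype V] {p : ℕ}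
    (O : Fin p → (V → Bool) → ℤ) (α β : V → Bool)
    (w : Fin p → ℤ) (hw01 : ∀ i, w i = 0 ∨ w i = 1)
    (hreif : ∀ i, w i = 1 ↔ O i α ≤ O i β)
    (hfals : ¬ ((∑ i, (Fintype.card V : ℤ) * (1 - w i)) +
        (∑ v, if β v = α v then (1 : ℤ) else 0) ≥ (Fintype.card V : ℤ))) :
    ∀ i, O i α ≤ O i β := by
  intro i
  apply (hreif i).mp
  by_contra hne
  have hw0 : w i = 0 := (hw01 i).resolve_right hne
  apply hfals
  have h1 : (∑ j, (Fintype.card V : ℤ) * (1 - w j)) ≥ (Fintype.card V : ℤ) := by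
    calc (Fintype.card V : ℤ) = (Fintype.card V : ℤ) * (1 - w i) := by
          rw [hw0]; ring
      _ ≤ ∑ j, (Fintype.card V : ℤ) * (1 - w j) := by
          apply Finset.single_le_sum (f := fun j => (Fintype.card V : ℤ) * (1 - w j))
          · intro j _
            rcases hw01 j with h | h <;> simp [h]
          · exact Finset.mem_univ i
  have h2 : (0 : ℤ) ≤ ∑ v, if β v = α v then (1 : ℤ) else 0 :=
    Finset.sum_nonneg fun v _ => by positivity
  linarith
end

section
/- The substitution σ_α mapping all objective variables to their values under α and all w_i to 1 satisfies the redundance conditions for C_α: (a) σ_α satisfies C_α; (b) σ_α satisfies each reification constraint w_i ⟺ (O_i ≥ O_i(α)); and (c) for any β falsifying C_α and satisfying the reifications, β∘σ_α = α weakly dominates β. -/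
/-- The witness σ_α (map all objective variables to their value under α and all
w_i to 1) satisfies the redundance conditions for C_α:
(a) σ_α satisfies C_α; (b) σ_α satisfies each reification; (c) any β satisfying
the reifications but falsifying C_α is weakly dominated by β∘σ_α = α. -/
theorem redundance_conditions_Calpha {V : Type*} [Fintype V] {p : ℕ}
    (O : Fin p → (V → Bool) → ℤ) (α : V → Bool)
    (Cα : (V → Bool) → (Fin p → ℤ) → Prop)
    (hCα : ∀ β w, Cα β w ↔
      (∑ i, (Fintype.card V : ℤ) * (1 - w i)) +
        (∑ v, if β v = α v then (1 : ℤ) else 0) ≥ (Fintype.card V : ℤ)) :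
    -- (a) σ_α satisfies C_α
    Cα α (fun _ => 1) ∧
    -- (b) σ_α satisfies each reification w_i ⟺ O_i ≥ O_i(α)
    (∀ i : Fin p, (1 : ℤ) = 1 ↔ O i α ≤ O i α) ∧
    -- (c) β∘σ_α = α weakly dominates any β satisfying the reifications but
    -- falsifying C_α
    (∀ β : V → Bool, ∀ w : Fin p → ℤ, (∀ i, w i = 0 ∨ w i = 1) →
      (∀ i, w i = 1 ↔ O i α ≤ O i β) → ¬ Cα β w → ∀ i, O i α ≤ O i β) := by
  refine ⟨?_, fun i => by simp, ?_⟩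
  · rw [hCα]
    simp [Finset.card_univ]
  · intro β w hw hreif hnot i
    rw [← hreif i]
    by_contra h0
    rcases hw i with h | h
    · apply hnot
      rw [hCα]
      have h1 : (∑ j, (Fintype.card V : ℤ) * (1 - w j)) ≥ (Fintype.card V : ℤ) := by
        calc (Fintype.card V : ℤ) = (Fintype.card V : ℤ) * (1 - w i) := by rw [h]; ring
        _ ≤ _ := Finset.single_le_sum (f := fun j => (Fintype.card V : ℤ) * (1 - w j))
            (fun j _ => by rcases hw j with h' | h' <;> simp [h']) (Finset.mem_univ i)
      have h2 : (0 : ℤ) ≤ ∑ v, if β v = α v then (1 : ℤ) else 0 :=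
        Finset.sum_nonneg (fun v _ => by positivity)
      linarith
    · exact h0 h
end

section
/- For a totalizer node with leaves ℓ_1,...,ℓ_n and output variables o_r,...,o_{r+n} where o_v reifies Σ_i ℓ_i ≥ v, the ordering constraint holds: if o_{v+1} is true then o_v is true, for all v. Consequently, for an assignment consistent with the reifications, the constraint (r+n−v+1)·o_v + Σ_{i=r}^{r+n}(1−o_i) ≥ r+n−v+1 is satisfied. -/
/-- Totalizer outputs are ordered: o_{v+1} implies o_v; consequently the
ordering constraint (r+n−v+1)·o_v + Σ_{i=r}^{r+n}(1−o_i) ≥ r+n−v+1 holds. -/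
theorem totalizer_ordering_constraint {n : ℕ}
    (l : Fin n → ℤ) (hl : ∀ i, l i = 0 ∨ l i = 1)
    (r : ℕ) (o : ℕ → Bool)
    (hreif : ∀ v ∈ Finset.Icc r (r + n), (o v = true ↔ (v : ℤ) ≤ ∑ i, l i)) :
    (∀ v, r ≤ v → v + 1 ≤ r + n → o (v + 1) = true → o v = true) ∧
    (∀ v ∈ Finset.Icc r (r + n),
      ((r : ℤ) + n - v + 1) * (if o v then 1 else 0) +
        (∑ i ∈ Finset.Icc r (r + n), (1 - (if o i then (1 : ℤ) else 0)))
        ≥ (r : ℤ) + n - v + 1) := by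
  have mono : ∀ u v, r ≤ u → u ≤ v → v ≤ r + n → o v = true → o u = true := by
    intro u v hu huv hv hov
    have h1 := (hreif v (Finset.mem_Icc.mpr ⟨le_trans hu huv, hv⟩)).mp hov
    exact (hreif u (Finset.mem_Icc.mpr ⟨hu, le_trans huv hv⟩)).mpr
      (le_trans (by exact_mod_cast huv) h1)
  refine ⟨fun v hv hv1 => mono v (v+1) hv (Nat.le_succ v) hv1, ?_⟩
  intro v hv
  obtain ⟨hv1, hv2⟩ := Finset.mem_Icc.mp hv
  by_cases hov : o v = true
  · rw [hov]
    simp only [if_true, mul_one]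
    have : (0:ℤ) ≤ ∑ i ∈ Finset.Icc r (r + n), (1 - (if o i then (1 : ℤ) else 0)) := by
      apply Finset.sum_nonneg
      intro i _
      by_cases h : o i <;> simp [h]
    linarith
  · rw [if_neg hov]
    have hfalse : ∀ i ∈ Finset.Icc v (r + n), o i = false := by
      intro i hi
      obtain ⟨h1, h2⟩ := Finset.mem_Icc.mp hi
      by_contra h
      exact hov (mono v i hv1 h1 h2 (by simpa using h))
    have hsub : Finset.Icc v (r + n) ⊆ Finset.Icc r (r + n) :=
      Finset.Icc_subset_Icc_left hv1
    have hge : (∑ i ∈ Finset.Icc r (r + n), (1 - (if o i then (1 : ℤ) else 0)))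
        ≥ ∑ i ∈ Finset.Icc v (r + n), (1 - (if o i then (1 : ℤ) else 0)) := by
      apply Finset.sum_le_sum_of_subset_of_nonneg hsub
      intro i _ _
      by_cases h : o i <;> simp [h]
    have heq : (∑ i ∈ Finset.Icc v (r + n), (1 - (if o i then (1 : ℤ) else 0)))
        = (r : ℤ) + n - v + 1 := by
      have hc : ∀ i ∈ Finset.Icc v (r + n),
          (1 - (if o i then (1 : ℤ) else 0)) = 1 := fun i hi => by
        rw [hfalse i hi]; simp
      rw [Finset.sum_congr rfl hc]
      simp only [Finset.sum_const, Nat.card_Icc, nsmul_eq_mul, mul_one]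
      rw [Nat.cast_sub (by omega : v ≤ r + n + 1)]
      push_cast
      ring
    linarith
end
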